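/- Every odd \(T\)-walk \(W\) in \(G\) that is not entirely contained in a given odd \(T\)-walk barrier \(B\) either traverses some edge of \(U(B)\) at least once, or traverses edges of \(I(B)\) at least twice (counting multiplicity of traversals). -/
import Mathlib


open scoped Classical

/-- Every odd `T`-walk not entirely contained in an odd `T`-walk barrier `B` either
traverses an edge of `U(B)`, or traverses edges of `I(B)` at least twice
(counting multiplicity of traversals). -/
theorem stmt4 {V : Type*} [DecidableEq V] (G : SimpleGraph V) (T : Set V)
    (B : G.Subgraph) (hTB : T ⊆ B.verts)
    (hbar : ∀ (x y : B.verts), (x : V) ∈ T → (y : V) ∈ T → (x : V) ≠ (y : V) →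
      ∀ w : B.coe.Walk x y, ¬ Odd w.length)
    (t₁ t₂ : V) (ht₁ : t₁ ∈ T) (ht₂ : t₂ ∈ T) (hne : t₁ ≠ t₂)
    (w : G.Walk t₁ t₂) (hodd : Odd w.length)
    (hnot : ¬ ∀ e ∈ w.edges, e ∈ B.edgeSet) :
    (∃ e ∈ w.edges,
        e ∉ B.edgeSet ∧ ∀ u v, e = s(u, v) → u ∈ B.verts ∧ v ∈ B.verts) ∨
    2 ≤ w.edges.countP
        (fun e => decide (∃ u v, e = s(u, v) ∧ u ∈ B.verts ∧ v ∉ B.verts)) := by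
  classical
  set P : Sym2 V → Bool :=
    (fun e => decide (∃ u v, e = s(u, v) ∧ u ∈ B.verts ∧ v ∉ B.verts)) with hP
  have hPiff : ∀ u v : V, P s(u, v) = true ↔ ¬ ((u ∈ B.verts) ↔ (v ∈ B.verts)) := by
    intro u v
    simp only [hP, decide_eq_true_iff]
    constructor
    · rintro ⟨a, b, hab, ha, hb⟩
      rw [Sym2.eq_iff] at hab
      rcases hab with ⟨rfl, rfl⟩ | ⟨rfl, rfl⟩ <;> tauto
    · intro h
      by_cases hu : u ∈ B.verts
      · exact ⟨u, v, rfl, hu, fun hv => h ⟨fun _ => hv, fun _ => hu⟩⟩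
      · refine ⟨v, u, Sym2.eq_swap.symm, ?_, hu⟩
        by_contra hv
        exact h ⟨fun h' => absurd h' hu, fun h' => absurd h' hv⟩
  -- parity of boundary crossings
  have key : ∀ {a b : V} (p : G.Walk a b),
      Even (p.edges.countP P) ↔ ((a ∈ B.verts) ↔ (b ∈ B.verts)) := by
    intro a b p
    induction p with
    | nil => simp
    | @cons u v c h q ih =>
      rw [SimpleGraph.Walk.edges_cons, List.countP_cons]
      by_cases hpe : P s(u, v) = true
      · have h1 := (hPiff u v).mp hpe
        simp only [hpe, if_true, Nat.even_add_one]
        rw [ih]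
        tauto
      · have h1 : ((u ∈ B.verts) ↔ (v ∈ B.verts)) := by
          by_contra h2
          exact hpe ((hPiff u v).mpr h2)
        simp only [hpe, Bool.false_eq_true, if_false, Nat.add_zero]
        rw [ih]
        tauto
  -- zero crossings: whole walk stays inside B.verts
  have zero : ∀ {a b : V} (p : G.Walk a b), p.edges.countP P = 0 → a ∈ B.verts →
      ∀ x ∈ p.support, x ∈ B.verts := by
    intro a b p
    induction p with
    | nil =>
      intro _ ha x hx
      rw [SimpleGraph.Walk.support_nil, List.mem_singleton] at hx
      subst hx; exact ha
    | @cons u v c h q ih =>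
      intro hc hu x hx
      rw [SimpleGraph.Walk.edges_cons, List.countP_cons] at hc
      have hq0 : q.edges.countP P = 0 := by omega
      have hpe : ¬ (P s(u, v) = true) := by
        intro hpe
        simp [hpe] at hc
      have hv : v ∈ B.verts := by
        by_contra hv
        exact hpe ((hPiff u v).mpr (by tauto))
      rw [SimpleGraph.Walk.support_cons, List.mem_cons] at hx
      rcases hx with rfl | hx
      · exact hu
      · exact ih hq0 hv x hx
  by_contra hcon
  push_neg at hcon
  obtain ⟨hU, hI⟩ := hcon
  have ht1B : t₁ ∈ B.verts := hTB ht₁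
  have ht2B : t₂ ∈ B.verts := hTB ht₂
  have heven : Even (w.edges.countP P) := (key w).mpr ⟨fun _ => ht2B, fun _ => ht1B⟩
  have hlt : w.edges.countP P < 2 := by
    rw [Nat.lt_iff_add_one_le]
    omega
  have hzero : w.edges.countP P = 0 := by
    rcases heven with ⟨k, hk⟩
    omega
  have hall := zero w hzero ht1B
  push_neg at hnot
  obtain ⟨e, he, heB⟩ := hnot
  obtain ⟨u, v, rfl, hbad⟩ := hU e he heB
  have hu : u ∈ B.verts := hall u (w.fst_mem_support_of_mem_edges he)
  have hv : v ∈ B.verts := hall v (w.snd_mem_support_of_mem_edges he)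
  tauto
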